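/- Let p be an odd prime and D ∈ ℤ/pℤ a non-square. Then for every element m of the parameter group P_{ℤ/pℤ} = (ℤ/pℤ) ∪ {α} (including m = α), the (p+2)-nd ⊙-power of m equals m, i.e. m^{⊙(p+2)} = m. -/

import Mathlib

/- The product `⊙` on the parameter set `P_K = K ∪ {α}`, realized as `Option K`
(`none` plays the role of `α`). -/
open Classical in
noncomputable def paraMul {K : Type*} [Field K] (D : K) : Option K → Option K → Option K
  | some a, some b => if a + b = 0 then none else some ((D + a * b) / (a + b))
  | none, x => x
  | some a, none => some a

/-- `n`-th power with respect to `⊙` (identity `α = none`). -/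
noncomputable def paraPow {K : Type*} [Field K] (D : K) (m : Option K) : ℕ → Option K
  | 0 => none
  | n + 1 => paraMul D m (paraPow D m n)

/- Adjoin `ω` with `ω ^ 2 = D`. The Cayley transform `ψ α = 1`, `ψ a = (a + ω) / (a - ω)`
turns `⊙` into multiplication, and `ψ m = 1` only for `m = α`. If `K` has `q` elements, the
Frobenius `x ↦ x ^ q` fixes `K` and sends `ω` to `-ω` (Euler's criterion:
`D ^ ((q - 1) / 2) = -1`), so `(ψ m) ^ q = (ψ m)⁻¹`. Hence `m ^ {⊙ (q + 1)} = α` and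
`m ^ {⊙ (q + 2)} = m`. -/

theorem paraMul_none_right {K : Type*} [Field K] (D : K) (m : Option K) :
    paraMul D m none = m := by
  cases m <;> rfl

section CayleyTransform

variable {K L : Type*} [Field K] [Field L] [Algebra K L] {D : K} {ω : L}

noncomputable def paraEmbed (ω : L) : Option K → L
  | none => 1
  | some a => (algebraMap K L a + ω) / (algebraMap K L a - ω)

theorem algebraMap_ne_of_sq_eq (hD : ¬IsSquare D) (hω : ω ^ 2 = algebraMap K L D) (a : K) :
    algebraMap K L a ≠ ω := by
  rintro rfl
  exact hD ⟨a, (algebraMap K L).injective (by rw [← hω, map_mul, sq])⟩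

theorem algebraMap_sub_ne_zero (hD : ¬IsSquare D) (hω : ω ^ 2 = algebraMap K L D) (a : K) :
    algebraMap K L a - ω ≠ 0 :=
  sub_ne_zero.mpr (algebraMap_ne_of_sq_eq hD hω a)

theorem algebraMap_add_ne_zero (hD : ¬IsSquare D) (hω : ω ^ 2 = algebraMap K L D) (a : K) :
    algebraMap K L a + ω ≠ 0 := by
  rw [← sub_neg_eq_add]
  exact sub_ne_zero.mpr (algebraMap_ne_of_sq_eq hD (by rwa [neg_sq]) a)

theorem paraEmbed_paraMul (hD : ¬IsSquare D) (hω : ω ^ 2 = algebraMap K L D)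
    (m n : Option K) : paraEmbed ω (paraMul D m n) = paraEmbed ω m * paraEmbed ω n := by
  rcases m with _ | a <;> rcases n with _ | b
  · exact (one_mul 1).symm
  · exact (one_mul _).symm
  · exact (mul_one _).symm
  have ha := algebraMap_sub_ne_zero hD hω a
  have hb := algebraMap_sub_ne_zero hD hω b
  by_cases hab : a + b = 0
  · obtain rfl : b = -a := eq_neg_of_add_eq_zero_right hab
    have ha' := algebraMap_add_ne_zero hD hω a
    simp only [paraMul, hab, if_true, paraEmbed, map_neg] at hb ⊢
    field_simp
    ring
  · set c := (D + a * b) / (a + b)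
    have hc : algebraMap K L c * (algebraMap K L a + algebraMap K L b) =
        ω ^ 2 + algebraMap K L a * algebraMap K L b := by
      rw [← map_add, ← map_mul, div_mul_cancel₀ _ hab, map_add, map_mul, hω]
    simp only [paraMul, hab, if_false, paraEmbed]
    rw [div_mul_div_comm, div_eq_div_iff (algebraMap_sub_ne_zero hD hω c) (mul_ne_zero ha hb)]
    linear_combination (-2 * ω) * hc

theorem paraEmbed_paraPow (hD : ¬IsSquare D) (hω : ω ^ 2 = algebraMap K L D)
    (m : Option K) (n : ℕ) : paraEmbed ω (paraPow D m n) = paraEmbed ω m ^ n := by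
  induction n with
  | zero => rw [paraPow, pow_zero]; rfl
  | succ n ih => rw [paraPow, paraEmbed_paraMul hD hω, ih, pow_succ']

theorem paraEmbed_eq_one_iff (h2 : (2 : K) ≠ 0) (hD : ¬IsSquare D)
    (hω : ω ^ 2 = algebraMap K L D) {m : Option K} : paraEmbed ω m = 1 ↔ m = none := by
  refine ⟨fun h => ?_, fun h => h ▸ rfl⟩
  rcases m with _ | a
  · rfl
  exfalso
  have hω0 : ω ≠ 0 := by simpa using (algebraMap_ne_of_sq_eq hD hω 0).symm
  rw [paraEmbed, div_eq_one_iff_eq (algebraMap_sub_ne_zero hD hω a)] at h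
  have h2L : (2 : L) ≠ 0 := by
    rw [← map_ofNat (algebraMap K L)]
    exact (map_ne_zero _).mpr h2
  exact mul_ne_zero h2L hω0 (by linear_combination h)

end CayleyTransform

open Polynomial in
theorem exists_sq_eq_algebraMap {K : Type*} [Field K] (D : K) :
    ∃ ω : SplittingField (X ^ 2 - C D), ω ^ 2 = algebraMap K _ D := by
  have hdeg : (X ^ 2 - C D).degree ≠ 0 := by rw [degree_X_pow_sub_C two_pos]; decide
  obtain ⟨ω, hω⟩ := (SplittingField.splits (X ^ 2 - C D)).exists_eval_eq_zero
    (by rwa [degree_map])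
  exact ⟨ω, by simpa [sub_eq_zero] using hω⟩

section FiniteField

variable {K L : Type*} [Field K] [Fintype K] [Field L] [Algebra K L] {D : K} {ω : L}

theorem ringChar_ne_two_of_not_isSquare (hD : ¬IsSquare D) : ringChar K ≠ 2 :=
  fun h => hD (FiniteField.isSquare_of_char_two h D)

theorem pow_card_eq_neg_of_sq_eq (hD : ¬IsSquare D) (hω : ω ^ 2 = algebraMap K L D) :
    ω ^ Fintype.card K = -ω := by
  have hK := ringChar_ne_two_of_not_isSquare hD
  have hD0 : D ≠ 0 := fun h => hD (h ▸ IsSquare.zero)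
  have euler : D ^ (Fintype.card K / 2) = -1 :=
    (FiniteField.pow_dichotomy hK hD0).resolve_left (mt (FiniteField.isSquare_iff hK hD0).mpr hD)
  have hodd := FiniteField.odd_card_of_char_ne_two hK
  calc ω ^ Fintype.card K = (ω ^ 2) ^ (Fintype.card K / 2) * ω := by
        rw [← pow_mul, ← pow_succ]
        congr 1
        omega
    _ = -ω := by rw [hω, ← map_pow, euler, map_neg, map_one, neg_one_mul]

theorem paraEmbed_pow_card_add_one (hD : ¬IsSquare D) (hω : ω ^ 2 = algebraMap K L D)
    (m : Option K) : paraEmbed ω m ^ (Fintype.card K + 1) = 1 := by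
  rcases m with _ | a
  · exact one_pow _
  have hconj : paraEmbed ω (some a) ^ Fintype.card K =
      (algebraMap K L a - ω) / (algebraMap K L a + ω) := by
    rw [← FiniteField.frobeniusAlgHom_apply K, paraEmbed, map_div₀, map_add, map_sub,
      AlgHom.commutes, FiniteField.frobeniusAlgHom_apply, pow_card_eq_neg_of_sq_eq hD hω,
      ← sub_eq_add_neg, sub_neg_eq_add]
  rw [pow_succ, hconj, paraEmbed, div_mul_div_comm, mul_comm (algebraMap K L a - ω)]
  exact div_self (mul_ne_zero (algebraMap_add_ne_zero hD hω a) (algebraMap_sub_ne_zero hD hω a))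

theorem paraPow_card_add_two (hD : ¬IsSquare D) (m : Option K) :
    paraPow D m (Fintype.card K + 2) = m := by
  obtain ⟨ω, hω⟩ := exists_sq_eq_algebraMap D
  have h2 : (2 : K) ≠ 0 := Ring.two_ne_zero (ringChar_ne_two_of_not_isSquare hD)
  have hcycle : paraPow D m (Fintype.card K + 1) = none := by
    rw [← paraEmbed_eq_one_iff h2 hD hω, paraEmbed_paraPow hD hω,
      paraEmbed_pow_card_add_one hD hω]
  rw [paraPow, hcycle, paraMul_none_right]

end FiniteField

theorem paraPow_p_add_two_general (p : ℕ) [Fact p.Prime] (D : ZMod p)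
    (hD : ∀ c : ZMod p, c ^ 2 ≠ D) :
    ∀ m : Option (ZMod p), paraPow D m (p + 2) = m := by
  intro m
  have hD' : ¬IsSquare D := fun ⟨c, hc⟩ => hD c (by rw [sq, hc])
  simpa only [ZMod.card] using paraPow_card_add_two hD' m

/-- For an odd prime `p` and a non-square `D ∈ ℤ/pℤ`, every element `m`
of the parameter group `P_{ℤ/pℤ}` (including `m = α`) satisfies `m^{⊙(p+2)} = m`. -/
theorem paraPow_p_add_two (p : ℕ) [Fact p.Prime] (hp2 : p ≠ 2) (D : ZMod p)
    (hD : ∀ c : ZMod p, c ^ 2 ≠ D) :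
    ∀ m : Option (ZMod p), paraPow D m (p + 2) = m :=
  paraPow_p_add_two_general p D hD
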